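/- arXiv:2303.06886 — 2 statements merged into one kernel-verified Lean document; each statement's English description precedes it below -/
import Mathlib

section
/- Let P : [0,∞) → ℝ be continuously differentiable with P(0) = 0, P'(Z) > 0 for all Z ≥ 0, (5/3)P(Z) − Z P'(Z) > 0 for all Z > 0, and p_∞ := lim_{Z→∞} P(Z)/Z^{5/3} > 0, and let a > 0. Define e(ρ,θ) = (3/2)(θ^{5/2}/ρ) P(ρ θ^{−3/2}) + (a/ρ)θ⁴ for ρ > 0, θ > 0. Then there exists c₀ > 0 such that ρ·e(ρ,θ) ≥ c₀·(ρ^{5/3} + θ⁴) for all ρ > 0 and θ > 0. -/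
/-!
The hypothesis `(5/3) P(Z) - Z P'(Z) > 0` says exactly that `P(Z) / Z^(5/3)` is strictly
decreasing, so it stays above its limit `p_∞`, i.e. `P(Z) ≥ p_∞ Z^(5/3)`. At
`Z = ρ θ^(-3/2)` the scaling `θ^(5/2) Z^(5/3) = ρ^(5/3)` turns this into
`ρ e(ρ,θ) ≥ (3/2) p_∞ ρ^(5/3) + a θ⁴`, so `c₀ = min p_∞ a` works.
-/

open Set Filter Topology

theorem AntitoneOn.le_of_tendsto_atTop {α β : Type*} [Preorder α] [IsDirectedOrder α]
    [Preorder β] [TopologicalSpace β] [ClosedIicTopology β] {g : α → β} {x : α} {L : β}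
    (hg : AntitoneOn g (Ici x)) (hlim : Tendsto g atTop (𝓝 L)) : L ≤ g x :=
  haveI : Nonempty α := ⟨x⟩
  le_of_tendsto hlim <| (eventually_ge_atTop x).mono fun _ hy => hg le_rfl hy hy

theorem strictAntiOn_div_rpow_of_hasDerivAt {f f' : ℝ → ℝ} {α : ℝ}
    (hf : ∀ x, 0 < x → HasDerivAt f (f' x) x)
    (hlt : ∀ x, 0 < x → x * f' x < α * f x) :
    StrictAntiOn (fun x => f x / x ^ α) (Ioi 0) := by
  have hderiv : ∀ x, 0 < x → HasDerivAt (fun x => f x / x ^ α)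
      ((f' x * x ^ α - f x * (α * x ^ (α - 1))) / (x ^ α) ^ 2) x := fun x hx =>
    (hf x hx).div (Real.hasDerivAt_rpow_const (Or.inl hx.ne')) (by positivity)
  refine strictAntiOn_of_deriv_neg (convex_Ioi 0)
    (fun x hx => (hderiv x hx).continuousAt.continuousWithinAt) fun x hx => ?_
  replace hx : 0 < x := by rwa [interior_Ioi] at hx
  rw [(hderiv x hx).deriv, Real.rpow_sub_one hx.ne']
  have hnum : f' x * x ^ α - f x * (α * (x ^ α / x)) = x ^ α / x * (x * f' x - α * f x) := by
    field_simp
  rw [hnum]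
  have := hlt x hx
  apply div_neg_of_neg_of_pos (mul_neg_of_pos_of_neg (by positivity) (by linarith)) (by positivity)

theorem rpow_mul_mul_mul_rpow_neg_rpow {ρ θ : ℝ} (hρ : 0 ≤ ρ) (hθ : 0 < θ) (a b : ℝ) :
    θ ^ (a * b) * (ρ * θ ^ (-a)) ^ b = ρ ^ b := by
  rw [Real.mul_rpow hρ (by positivity), ← Real.rpow_mul hθ.le, mul_left_comm, ← Real.rpow_add hθ,
    neg_mul, add_neg_cancel, Real.rpow_zero, mul_one]

theorem mul_rpow_le_of_tendsto_div_rpow {f f' : ℝ → ℝ} {α L x : ℝ}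
    (hf : ∀ x, 0 < x → HasDerivAt f (f' x) x) (hlt : ∀ x, 0 < x → x * f' x < α * f x)
    (hlim : Tendsto (fun x => f x / x ^ α) atTop (𝓝 L)) (hx : 0 < x) :
    L * x ^ α ≤ f x :=
  (le_div_iff₀ (by positivity)).1 <|
    ((strictAntiOn_div_rpow_of_hasDerivAt hf hlt).antitoneOn.mono
      (Ici_subset_Ioi.2 hx)).le_of_tendsto_atTop hlim

theorem stmt5_general (P : ℝ → ℝ) (a pinf : ℝ)
    (hP : ContDiffOn ℝ 1 P (Set.Ici 0))
    (hPZ : ∀ Z : ℝ, 0 < Z → 0 < (5 / 3) * P Z - Z * derivWithin P (Set.Ici 0) Z)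
    (hlim : Tendsto (fun Z : ℝ => P Z / Z ^ ((5 : ℝ) / 3)) atTop (𝓝 pinf))
    (hpinf : 0 < pinf) (ha : 0 < a) :
    ∃ c₀ : ℝ, 0 < c₀ ∧ ∀ ρ θ : ℝ, 0 < ρ → 0 < θ →
      c₀ * (ρ ^ ((5 : ℝ) / 3) + θ ^ 4) ≤
        ρ * ((3 / 2) * (θ ^ ((5 : ℝ) / 2) / ρ) * P (ρ * θ ^ (-(3 : ℝ) / 2)) + (a / ρ) * θ ^ 4) := by
  have hderiv : ∀ Z, 0 < Z → HasDerivAt P (derivWithin P (Ici 0) Z) Z := fun Z hZ =>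
    ((hP.differentiableOn one_ne_zero) Z hZ.le).hasDerivWithinAt.hasDerivAt (Ici_mem_nhds hZ)
  have hlower : ∀ Z, 0 < Z → pinf * Z ^ ((5 : ℝ) / 3) ≤ P Z := fun Z =>
    mul_rpow_le_of_tendsto_div_rpow hderiv (fun Z hZ => by linarith [hPZ Z hZ]) hlim
  refine ⟨min pinf a, lt_min hpinf ha, fun ρ θ hρ hθ => ?_⟩
  set Z := ρ * θ ^ (-(3 : ℝ) / 2)
  have hscale : θ ^ ((5 : ℝ) / 2) * Z ^ ((5 : ℝ) / 3) = ρ ^ ((5 : ℝ) / 3) := by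
    convert rpow_mul_mul_mul_rpow_neg_rpow hρ.le hθ (3 / 2) (5 / 3) using 3 <;>
      norm_num [Z, neg_div]
  have hθpow : 0 < θ ^ ((5 : ℝ) / 2) := by positivity
  calc min pinf a * (ρ ^ ((5 : ℝ) / 3) + θ ^ 4)
      ≤ pinf * ρ ^ ((5 : ℝ) / 3) + a * θ ^ 4 := by
        rw [mul_add]
        gcongr
        exacts [min_le_left _ _, min_le_right _ _]
    _ = θ ^ ((5 : ℝ) / 2) * (pinf * Z ^ ((5 : ℝ) / 3)) + a * θ ^ 4 := by rw [← hscale]; ring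
    _ ≤ (3 / 2) * θ ^ ((5 : ℝ) / 2) * P Z + a * θ ^ 4 := by
        nlinarith [mul_le_mul_of_nonneg_left (hlower Z (by positivity)) hθpow.le,
          mul_pos hθpow (mul_pos hpinf (by positivity : 0 < Z ^ ((5 : ℝ) / 3)))]
    _ = ρ * ((3 / 2) * (θ ^ ((5 : ℝ) / 2) / ρ) * P Z + (a / ρ) * θ ^ 4) := by field_simp

/-- Coercivity of the internal energy
`e(ρ,θ) = (3/2) (θ^(5/2)/ρ) P(ρ θ^(-3/2)) + (a/ρ) θ⁴`:
there is `c₀ > 0` with `ρ e(ρ,θ) ≥ c₀ (ρ^(5/3) + θ⁴)`. -/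
theorem stmt5 (P : ℝ → ℝ) (a pinf : ℝ)
    (hP : ContDiffOn ℝ 1 P (Set.Ici 0))
    (hP0 : P 0 = 0)
    (hP' : ∀ Z : ℝ, 0 ≤ Z → 0 < derivWithin P (Set.Ici 0) Z)
    (hPZ : ∀ Z : ℝ, 0 < Z → 0 < (5 / 3) * P Z - Z * derivWithin P (Set.Ici 0) Z)
    (hlim : Tendsto (fun Z : ℝ => P Z / Z ^ ((5 : ℝ) / 3)) atTop (𝓝 pinf))
    (hpinf : 0 < pinf) (ha : 0 < a) :
    ∃ c₀ : ℝ, 0 < c₀ ∧ ∀ ρ θ : ℝ, 0 < ρ → 0 < θ →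
      c₀ * (ρ ^ ((5 : ℝ) / 3) + θ ^ 4) ≤
        ρ * ((3 / 2) * (θ ^ ((5 : ℝ) / 2) / ρ) * P (ρ * θ ^ (-(3 : ℝ) / 2)) + (a / ρ) * θ ^ 4) :=
  stmt5_general P a pinf hP hPZ hlim hpinf ha
end

section
/- Let 0 < r₁ < r₂, Ω = {x ∈ ℝ³ : r₁ < |x| < r₂}, ω ∈ ℝ³ with ω ≠ 0, ḡ ∈ ℝ, and define M(x) = ḡ/|x| + (1/2)|ω × x|² on Ω. Let p : (0,∞)² → ℝ be continuously differentiable with ∂p/∂θ(ρ,θ) ≠ 0 for all (ρ,θ) ∈ (0,∞)², let ρ : Ω → (0,∞) be twice continuously differentiable, and let θ(x) = g(|x|) where g : (r₁,r₂) → (0,∞) is twice continuously differentiable with g'(r) ≠ 0 for all r ∈ (r₁,r₂). Then it is impossible that ∇[p(ρ(x),θ(x))] = ρ(x)·∇M(x) holds for every x ∈ Ω. -/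
open Set Filter Topology

/-- The cross product on `ℝ³ = EuclideanSpace ℝ (Fin 3)`. -/
noncomputable def cross3 (a b : EuclideanSpace ℝ (Fin 3)) : EuclideanSpace ℝ (Fin 3) :=
  (WithLp.equiv 2 (Fin 3 → ℝ)).symm
    ![a 1 * b 2 - a 2 * b 1, a 2 * b 0 - a 0 * b 2, a 0 * b 1 - a 1 * b 0]

/-!
Write `P = p(ρ, θ)` and `G = ∇M`. Since `∇P = ρ G`, the derivative of `ρ G` is a Hessian and
hence symmetric; so is `DG`, and comparing the two forces `∇ρ ∥ G`, i.e. `∇ρ × ∇M = 0`. The chain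
rule gives `∇P = p_ρ ∇ρ + p_θ g'(|x|) x / |x|` with `p_θ g' ≠ 0`, hence also `x ∥ G`. But
`G(x) = (|ω|² - ḡ/|x|³) x - (ω·x) ω` is parallel to `x` only where `ω·x = 0` or `x ∥ ω`, and the
shell contains points where neither holds.
-/

open InnerProductSpace ContinuousLinearMap
open scoped RealInnerProductSpace

theorem norm_cross3_sq (a b : EuclideanSpace ℝ (Fin 3)) :
    ‖cross3 a b‖ ^ 2 = ‖a‖ ^ 2 * ‖b‖ ^ 2 - ⟪a, b⟫ ^ 2 := by
  simp only [EuclideanSpace.norm_sq_eq, cross3, PiLp.inner_apply, RCLike.inner_apply,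
    Fin.sum_univ_three, Real.norm_eq_abs, sq_abs, WithLp.equiv_symm_apply, Matrix.cons_val_zero,
    Matrix.cons_val_one, Matrix.cons_val, Real.ringHom_apply]
  ring

section

variable {E : Type*} [NormedAddCommGroup E] [InnerProductSpace ℝ E]

theorem hasFDerivAt_norm_of_ne_zero {x : E} (hx : x ≠ 0) :
    HasFDerivAt (fun y : E => ‖y‖) (‖x‖⁻¹ • innerSL ℝ x) x := by
  have hx' : 0 < ‖x‖ := norm_pos_iff.2 hx
  have h := (Real.hasDerivAt_sqrt (pow_pos hx' 2).ne').comp_hasFDerivAt x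
    (hasStrictFDerivAt_norm_sq x).hasFDerivAt
  have hnorm : (fun y : E => ‖y‖) = (fun t => √t) ∘ fun y : E => ‖y‖ ^ 2 :=
    funext fun y => (Real.sqrt_sq (norm_nonneg y)).symm
  rw [hnorm]
  refine h.congr_fderiv ?_
  ext v
  simp only [Real.sqrt_sq hx'.le, smul_apply, coe_innerSL_apply, nsmul_eq_mul, Nat.cast_ofNat,
    smul_eq_mul]
  field_simp

theorem exists_norm_eq_inner_ne_zero_inner_sq_lt [FiniteDimensional ℝ E]
    (hE : 2 ≤ Module.finrank ℝ E) {ω : E} (hω : ω ≠ 0) {r : ℝ} (hr : 0 < r) :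
    ∃ x : E, ‖x‖ = r ∧ ⟪ω, x⟫ ≠ 0 ∧ ⟪ω, x⟫ ^ 2 < ‖ω‖ ^ 2 * ‖x‖ ^ 2 := by
  obtain ⟨u, hu, hu0⟩ : ∃ u ∈ (ℝ ∙ ω)ᗮ, u ≠ 0 := by
    refine Submodule.exists_mem_ne_zero_of_ne_bot fun h => ?_
    have := (ℝ ∙ ω).finrank_add_finrank_orthogonal
    rw [h, finrank_bot, finrank_span_singleton hω] at this
    omega
  have hωu : ⟪ω, u⟫ = 0 :=
    (Submodule.mem_orthogonal_singleton_iff_inner_right).1 hu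
  have hω' : 0 < ‖ω‖ := norm_pos_iff.2 hω
  have hu' : 0 < ‖u‖ := norm_pos_iff.2 hu0
  -- `3² + 4² = 5²`
  set x : E := (3 * r / (5 * ‖ω‖)) • ω + (4 * r / (5 * ‖u‖)) • u with hx_def
  have hωx : ⟪ω, x⟫ = 3 * r * ‖ω‖ / 5 := by
    simp only [x, inner_add_right, real_inner_smul_right, real_inner_self_eq_norm_sq, hωu,
      mul_zero, add_zero]
    field_simp
  have hx : ‖x‖ ^ 2 = r ^ 2 := by
    have hperp : ⟪(3 * r / (5 * ‖ω‖)) • ω, (4 * r / (5 * ‖u‖)) • u⟫ = 0 := by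
      simp [real_inner_smul_left, real_inner_smul_right, hωu]
    rw [sq, hx_def, norm_add_sq_eq_norm_sq_add_norm_sq_real hperp, norm_smul, norm_smul,
      Real.norm_eq_abs, Real.norm_eq_abs, abs_of_pos (by positivity),
      abs_of_pos (by positivity)]
    field_simp
    ring
  have hxr : ‖x‖ = r := by nlinarith [norm_nonneg x]
  refine ⟨x, hxr, by rw [hωx]; positivity, ?_⟩
  rw [hωx, hxr]
  have := mul_pos (pow_pos hr 2) (pow_pos hω' 2)
  nlinarith

-- The paper's `M`, with `‖ω × y‖²` expanded by Lagrange's identity.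
noncomputable def rotatingPotential (ω : E) (gbar : ℝ) (y : E) : ℝ :=
  gbar / ‖y‖ + 1 / 2 * (‖ω‖ ^ 2 * ‖y‖ ^ 2 - ⟪ω, y⟫ ^ 2)

noncomputable def rotatingPotentialGrad (ω : E) (gbar : ℝ) (y : E) : E :=
  (‖ω‖ ^ 2 - gbar / ‖y‖ ^ 3) • y - ⟪ω, y⟫ • ω

theorem differentiableAt_rotatingPotentialGrad (ω : E) (gbar : ℝ) {y : E} (hy : y ≠ 0) :
    DifferentiableAt ℝ (rotatingPotentialGrad ω gbar) y := by
  have hn := (hasFDerivAt_norm_of_ne_zero hy).differentiableAt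
  have hω : DifferentiableAt ℝ (fun z : E => ⟪ω, z⟫) y := (innerSL ℝ ω).differentiableAt
  unfold rotatingPotentialGrad
  fun_prop (disch := exact pow_ne_zero 3 (norm_ne_zero_iff.2 hy))

theorem hasFDerivAt_comp_prodMk_comp_norm {p : ℝ × ℝ → ℝ} {Dp : ℝ × ℝ →L[ℝ] ℝ} {ρ : E → ℝ}
    {ρ' : E →L[ℝ] ℝ} {g : ℝ → ℝ} {g' : ℝ} {x : E} (hx : x ≠ 0)
    (hp : HasFDerivAt p Dp (ρ x, g ‖x‖)) (hρ : HasFDerivAt ρ ρ' x) (hg : HasDerivAt g g' ‖x‖) :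
    HasFDerivAt (fun y => p (ρ y, g ‖y‖))
      (Dp (1, 0) • ρ' + (Dp (0, 1) * g' / ‖x‖) • innerSL ℝ x) x := by
  have hθ := hg.comp_hasFDerivAt x (hasFDerivAt_norm_of_ne_zero hx)
  refine (hp.comp x (hρ.prodMk hθ)).congr_fderiv ?_
  ext v
  have hDp (a b : ℝ) : Dp (a, b) = a * Dp (1, 0) + b * Dp (0, 1) := by
    rw [← smul_eq_mul, ← smul_eq_mul, ← map_smul, ← map_smul, ← map_add]
    simp
  simp only [comp_apply, ContinuousLinearMap.prod_apply, smul_apply, coe_innerSL_apply,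
    smul_eq_mul, add_apply]
  rw [hDp]
  ring

theorem inner_mul_sub_inner_sq_eq_zero_of_rotatingPotentialGrad {ω x : E} {gbar : ℝ}
    (h : ∀ v w, ⟪x, v⟫ * ⟪rotatingPotentialGrad ω gbar x, w⟫ =
      ⟪x, w⟫ * ⟪rotatingPotentialGrad ω gbar x, v⟫) :
    ⟪ω, x⟫ * (‖ω‖ ^ 2 * ‖x‖ ^ 2 - ⟪ω, x⟫ ^ 2) = 0 := by
  have h := h ω x
  simp only [rotatingPotentialGrad, inner_sub_left, real_inner_smul_left,
    real_inner_self_eq_norm_sq, real_inner_comm ω x] at h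
  linear_combination h

variable [CompleteSpace E]

theorem hasGradientAt_rotatingPotential (ω : E) (gbar : ℝ) {y : E} (hy : y ≠ 0) :
    HasGradientAt (rotatingPotential ω gbar) (rotatingPotentialGrad ω gbar y) y := by
  have hy' : 0 < ‖y‖ := norm_pos_iff.2 hy
  have hω : HasFDerivAt (fun z : E => ⟪ω, z⟫) (innerSL ℝ ω) y := (innerSL ℝ ω).hasFDerivAt
  have h := (((hasDerivAt_inv hy'.ne').const_mul gbar).comp_hasFDerivAt y
    (hasFDerivAt_norm_of_ne_zero hy)).add
    ((((hasStrictFDerivAt_norm_sq y).hasFDerivAt.const_mul (‖ω‖ ^ 2)).sub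
      (hω.pow 2)).const_mul (1 / 2 : ℝ))
  have hM : rotatingPotential ω gbar =
      fun z => gbar * ‖z‖⁻¹ + 1 / 2 * (‖ω‖ ^ 2 * ‖z‖ ^ 2 - ⟪ω, z⟫ ^ 2) := by
    funext z
    rw [rotatingPotential, div_eq_mul_inv]
  rw [hasGradientAt_iff_hasFDerivAt, hM]
  refine h.congr_fderiv ?_
  ext v
  simp only [rotatingPotentialGrad, toDual_apply_apply, inner_sub_left, real_inner_smul_left,
    add_apply, neg_apply, smul_apply, sub_apply, coe_innerSL_apply, smul_eq_mul, nsmul_eq_mul,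
    mul_neg, neg_smul, one_div, pow_one, Nat.add_one_sub_one, Nat.cast_ofNat]
  field_simp
  ring

theorem HasFDerivAt.inner_apply_comm_of_hasGradientAt {f : E → ℝ} {F : E → E} {F' : E →L[ℝ] E}
    {x : E} (hf : ∀ᶠ y in 𝓝 x, HasGradientAt f (F y) y) (hF : HasFDerivAt F F' x) (v w : E) :
    ⟪F' v, w⟫ = ⟪F' w, v⟫ := by
  have h := second_derivative_symmetric_of_eventually (hf.mono fun y hy => hy.hasFDerivAt)
    ((toDual ℝ E).toContinuousLinearEquiv.toContinuousLinearMap.hasFDerivAt.comp x hF) v w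
  simpa [real_inner_comm] using h

theorem mul_inner_comm_of_hasGradientAt_smul {P M ρ : E → ℝ} {G : E → E} {ρ' : E →L[ℝ] ℝ}
    {x : E} (hP : ∀ᶠ y in 𝓝 x, HasGradientAt P (ρ y • G y) y)
    (hM : ∀ᶠ y in 𝓝 x, HasGradientAt M (G y) y) (hρ : HasFDerivAt ρ ρ' x)
    (hG : DifferentiableAt ℝ G x) (v w : E) :
    ρ' v * ⟪G x, w⟫ = ρ' w * ⟪G x, v⟫ := by
  have hMsymm := hG.hasFDerivAt.inner_apply_comm_of_hasGradientAt hM v w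
  have hPsymm := (hρ.smul hG.hasFDerivAt).inner_apply_comm_of_hasGradientAt hP v w
  simp only [add_apply, smul_apply, smulRight_apply, inner_add_left, real_inner_smul_left] at hPsymm
  linear_combination hPsymm - ρ x * hMsymm

theorem inner_mul_inner_comm_of_gradient_eq_smul {U : Set E} {p : ℝ × ℝ → ℝ} {ρ M : E → ℝ}
    {g : ℝ → ℝ} {G : E → E} {x : E} (hU : IsOpen U) (hxU : x ∈ U) (hU0 : ∀ y ∈ U, y ≠ 0)
    (hp : ∀ y ∈ U, DifferentiableAt ℝ p (ρ y, g ‖y‖)) (hρ : ∀ y ∈ U, DifferentiableAt ℝ ρ y)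
    (hg : ∀ y ∈ U, DifferentiableAt ℝ g ‖y‖) (hpθ : deriv (fun t => p (ρ x, t)) (g ‖x‖) ≠ 0)
    (hg' : deriv g ‖x‖ ≠ 0) (hM : ∀ y ∈ U, HasGradientAt M (G y) y)
    (hG : DifferentiableAt ℝ G x)
    (hbal : ∀ y ∈ U, gradient (fun y => p (ρ y, g ‖y‖)) y = ρ y • G y) (v w : E) :
    ⟪x, v⟫ * ⟪G x, w⟫ = ⟪x, w⟫ * ⟪G x, v⟫ := by
  have hPder (y : E) (hy : y ∈ U) := hasFDerivAt_comp_prodMk_comp_norm (hU0 y hy)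
    (hp y hy).hasFDerivAt (hρ y hy).hasFDerivAt (hg y hy).hasDerivAt
  have hP : ∀ᶠ y in 𝓝 x, HasGradientAt (fun y => p (ρ y, g ‖y‖)) (ρ y • G y) y := by
    filter_upwards [hU.mem_nhds hxU] with y hy
    rw [← hbal y hy]
    exact (hPder y hy).differentiableAt.hasGradientAt
  have hcurl := mul_inner_comm_of_hasGradientAt_smul hP
    (eventually_of_mem (hU.mem_nhds hxU) hM) (hρ x hxU).hasFDerivAt hG v w
  have hchain (u : E) := DFunLike.congr_fun (hP.self_of_nhds.hasFDerivAt.unique (hPder x hxU)) u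
  simp only [map_smul, smul_apply, toDual_apply_apply, smul_eq_mul, add_apply,
    coe_innerSL_apply] at hchain
  set Dp := fderiv ℝ p (ρ x, g ‖x‖)
  have hDp : Dp (0, 1) = deriv (fun t => p (ρ x, t)) (g ‖x‖) :=
    ((hp x hxU).hasFDerivAt.comp_hasDerivAt (g ‖x‖)
      ((hasDerivAt_const _ (ρ x)).prodMk (hasDerivAt_id _))).deriv.symm
  have hb : Dp (0, 1) * deriv g ‖x‖ / ‖x‖ ≠ 0 := by
    rw [hDp]
    exact div_ne_zero (mul_ne_zero hpθ hg') (norm_ne_zero_iff.2 (hU0 x hxU))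
  apply mul_left_cancel₀ hb
  linear_combination ⟪G x, v⟫ * hchain w - ⟪G x, w⟫ * hchain v - Dp (1, 0) * hcurl

end

/-- Nonexistence of static solutions in the rotating spherical shell
`Ω = {r₁ < |x| < r₂}` with potential `M(x) = ḡ/|x| + (1/2)|ω × x|²`, `ω ≠ 0`: if
`p` is continuously differentiable on `(0,∞)²` with `∂p/∂θ ≠ 0` there, `ρ : Ω → (0,∞)`
is twice continuously differentiable, and `θ(x) = g(|x|)` with `g : (r₁,r₂) → (0,∞)`
twice continuously differentiable and `g' ≠ 0`, then the hydrostatic balance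
`∇[p(ρ,θ)] = ρ ∇M` cannot hold on all of `Ω`. -/
theorem stmt14 (r₁ r₂ : ℝ) (hr₁ : 0 < r₁) (hr₁₂ : r₁ < r₂)
    (ω : EuclideanSpace ℝ (Fin 3)) (hω : ω ≠ 0) (gbar : ℝ)
    (p : ℝ × ℝ → ℝ)
    (hp : ContDiffOn ℝ 1 p (Set.Ioi 0 ×ˢ Set.Ioi 0))
    (hpθ : ∀ r t : ℝ, 0 < r → 0 < t → deriv (fun t' => p (r, t')) t ≠ 0)
    (ρ : EuclideanSpace ℝ (Fin 3) → ℝ)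
    (hρpos : ∀ x : EuclideanSpace ℝ (Fin 3), r₁ < ‖x‖ → ‖x‖ < r₂ → 0 < ρ x)
    (hρ : ContDiffOn ℝ 2 ρ {x : EuclideanSpace ℝ (Fin 3) | r₁ < ‖x‖ ∧ ‖x‖ < r₂})
    (g : ℝ → ℝ)
    (hgC : ContDiffOn ℝ 2 g (Set.Ioo r₁ r₂))
    (hgpos : ∀ r ∈ Set.Ioo r₁ r₂, 0 < g r)
    (hg' : ∀ r ∈ Set.Ioo r₁ r₂, deriv g r ≠ 0) :
    ¬ (∀ x : EuclideanSpace ℝ (Fin 3), r₁ < ‖x‖ → ‖x‖ < r₂ →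
        gradient (fun y : EuclideanSpace ℝ (Fin 3) => p (ρ y, g ‖y‖)) x =
          ρ x • gradient
            (fun y : EuclideanSpace ℝ (Fin 3) => gbar / ‖y‖ + (1 / 2) * ‖cross3 ω y‖ ^ 2) x) := by
  intro hbal
  obtain ⟨x, hxr, hωx, hωx_lt⟩ := exists_norm_eq_inner_ne_zero_inner_sq_lt
    (by simp : 2 ≤ Module.finrank ℝ (EuclideanSpace ℝ (Fin 3))) hω
    (show 0 < (r₁ + r₂) / 2 by linarith)
  set U := {x : EuclideanSpace ℝ (Fin 3) | r₁ < ‖x‖ ∧ ‖x‖ < r₂}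
  have hU : IsOpen U := isOpen_Ioo.preimage continuous_norm
  have hxU : x ∈ U := ⟨by linarith, by linarith⟩
  have hU0 (y) (hy : y ∈ U) : y ≠ 0 := norm_pos_iff.1 (hr₁.trans hy.1)
  have hM : (fun y => gbar / ‖y‖ + (1 / 2) * ‖cross3 ω y‖ ^ 2) = rotatingPotential ω gbar := by
    funext y
    rw [norm_cross3_sq, rotatingPotential]
  have hpar := inner_mul_inner_comm_of_gradient_eq_smul hU hxU hU0
    (fun y hy => (hp.contDiffAt ((isOpen_Ioi.prod isOpen_Ioi).mem_nhds
      (mk_mem_prod (hρpos y hy.1 hy.2) (hgpos _ hy)))).differentiableAt one_ne_zero)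
    (fun y hy => (hρ.contDiffAt (hU.mem_nhds hy)).differentiableAt two_ne_zero)
    (fun y hy => (hgC.contDiffAt (isOpen_Ioo.mem_nhds hy)).differentiableAt two_ne_zero)
    (hpθ _ _ (hρpos x hxU.1 hxU.2) (hgpos _ hxU)) (hg' _ hxU)
    (fun y hy => hasGradientAt_rotatingPotential ω gbar (hU0 y hy))
    (differentiableAt_rotatingPotentialGrad ω gbar (hU0 x hxU))
    (fun y hy => by
      rw [hbal y hy.1 hy.2, hM, (hasGradientAt_rotatingPotential ω gbar (hU0 y hy)).gradient])
  exact mul_ne_zero hωx (sub_pos.2 hωx_lt).ne'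
    (inner_mul_sub_inner_sq_eq_zero_of_rotatingPotentialGrad hpar)
end
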